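/- Let s ≥ 2 and t be coprime to s, and let W_s be the affine symmetric group of type Ã_{s-1} acting on partitions via the level t action. Then for any partition λ and any w ∈ W_s, the t-core of wλ equals the t-core of λ. -/

import Mathlib

open Classical

/-- A partition: an infinite weakly decreasing sequence of non-negative integers
with finite sum.  Here `f n` denotes the part `λ_{n+1}`. -/
structure SeqPartition where
  f : ℕ → ℕ
  antitone : ∀ ⦃m n : ℕ⦄, m ≤ n → f n ≤ f m
  eventually_zero : ∃ N, ∀ n, N ≤ n → f n = 0

instance : Inhabited SeqPartition :=
  ⟨⟨fun _ => 0, fun _ _ _ => le_rfl, ⟨0, fun _ _ => rfl⟩⟩⟩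

namespace SeqPartition

/-- The beta-set `β_r(λ) = {λ_i - i + r : i ≥ 1}`. -/
def beta (r : ℤ) (l : SeqPartition) : Set ℤ :=
  {x | ∃ n : ℕ, x = (l.f n : ℤ) - (n + 1) + r}

/-- The size `|λ|` of a partition. -/
noncomputable def size (l : SeqPartition) : ℕ := ∑ᶠ n, l.f n

/-- The partition whose beta-set (for some shift `r`) is `B`, if it exists. -/
noncomputable def ofBeta (B : Set ℤ) : SeqPartition :=
  if h : ∃ l : SeqPartition, ∃ r : ℤ, beta r l = B then h.choose else default

/-- The beta-set of the `s`-core: beads pushed up their runners as far as possible.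
A position `x` is occupied iff the number of beads of `B` weakly above it on its runner
exceeds the number of gaps strictly below it on its runner. -/
def coreBeta (s : ℕ) (B : Set ℤ) : Set ℤ :=
  {x | ({y : ℤ | y ∉ B ∧ y ≡ x [ZMOD (s : ℤ)] ∧ y < x}).ncard
      < ({b : ℤ | b ∈ B ∧ b ≡ x [ZMOD (s : ℤ)] ∧ x ≤ b}).ncard}

/-- The `s`-core of a partition. -/
noncomputable def core (s : ℕ) (l : SeqPartition) : SeqPartition :=
  ofBeta (coreBeta s (beta 0 l))

/-- `λ` is an `s`-core. -/
def IsCore (s : ℕ) (l : SeqPartition) : Prop := core s l = l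

/-- The `s`-weight of `λ`. -/
noncomputable def wt (s : ℕ) (l : SeqPartition) : ℕ := (size l - size (core s l)) / s

/-- The component of the `s`-quotient of `λ` indexed by `j : ZMod s`. -/
noncomputable def quot (s : ℕ) (l : SeqPartition) (j : ZMod s) : SeqPartition :=
  ofBeta {z : ℤ | ((j.val : ℤ) + (s : ℤ) * z) ∈ beta 0 l}

/-- The `s`-set entry `Γ_j(λ)`: the smallest integer in the class `j` mod `s`
not lying in the beta-set of the `s`-core of `λ`. -/
noncomputable def sSet (s : ℕ) (l : SeqPartition) (j : ZMod s) : ℤ :=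
  sInf {x : ℤ | (x : ZMod s) = j ∧ x ∉ beta 0 (core s l)}

/-- `λ` is an `[s:t]`-core. -/
def IsGenCore (s t : ℕ) (l : SeqPartition) : Prop :=
  wt s (core t l) = wt s l

/-- The level `t` action of the generator `w_i` of the affine symmetric group `W_s` on `ℤ`. -/
def genActZ (s t : ℕ) (i : ZMod s) (n : ℤ) : ℤ :=
  if (n : ZMod s) = (i - 1) * (t : ZMod s) - ((((s : ℤ) - 1) * ((t : ℤ) - 1) / 2 : ℤ) : ZMod s)
    then n + t
  else if (n : ZMod s) = i * (t : ZMod s) - ((((s : ℤ) - 1) * ((t : ℤ) - 1) / 2 : ℤ) : ZMod s)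
    then n - t
  else n

/-- The level `t` action of the generator `w_i` of `W_s` on partitions, via beta-sets. -/
noncomputable def genAct (s t : ℕ) (i : ZMod s) (l : SeqPartition) : SeqPartition :=
  ofBeta (genActZ s t i '' beta 0 l)

/-- The action of a word in the generators of `W_s`, at level `t`, on partitions. -/
noncomputable def wordAct (s t : ℕ) (w : List (ZMod s)) (l : SeqPartition) : SeqPartition :=
  w.foldr (genAct s t) l

/-- `λ` and `μ` lie in the same orbit for the level `t` action of `W_s`. -/
def SameOrbit (s t : ℕ) (l m : SeqPartition) : Prop :=
  ∃ w : List (ZMod s), wordAct s t w l = m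

/-- `λ` and `μ` lie in the same orbit for the commuting actions of `W_s` (level `t`)
and `W_t` (level `s`). -/
def SameOrbit2 (s t : ℕ) (l m : SeqPartition) : Prop :=
  ∃ a : List (ZMod s), ∃ b : List (ZMod t), wordAct s t a (wordAct t s b l) = m

/-- The `t`-weighted `s`-quotient of `λ`: the multiset of pairs
`(Γ_i(λ) + tℤ, λ^(i))` over `i ∈ ℤ/sℤ`. -/
noncomputable def twq (s t : ℕ) (l : SeqPartition) : Multiset (ZMod t × SeqPartition) :=
  ((List.range s).map (fun i =>
    (((sSet s l (i : ZMod s) : ℤ) : ZMod t), quot s l (i : ZMod s))) : Multiset _)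

/-- The largest `(s,t)`-core `κ_{s,t}`: the partition whose beta-set is the set of
integers not expressible as a non-negative integer combination of `s` and `t`. -/
noncomputable def kappa (s t : ℕ) : SeqPartition :=
  ofBeta {x : ℤ | ¬ ∃ a b : ℕ, x = (a : ℤ) * s + (b : ℤ) * t}

end SeqPartition

/-!
The generator `w_i` acts on `ℤ` by an involution `σ` that moves every integer by `0` or `±t`, so
it maps each runner of the `t`-abacus to itself. Membership of `x` in the beta-set of the `t`-core
is decided by comparing the number of positions on the runner of `x` between a point `a` far
below and `x` with the number of beads on that runner above `a`. The involution `σ` permutes the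
runner positions above `a` that it does not send below `a`, and the others lie in the region where
every position is a bead, so this bead count does not change. The beta-set of `w_i λ` is
`σ (β_0 λ)` only up to translation, which the core construction commutes with.
-/

namespace SeqPartition

open Set Function

attribute [ext] SeqPartition

section Beta

lemma beta_eq_range (r : ℤ) (l : SeqPartition) :
    beta r l = range fun n : ℕ => (l.f n : ℤ) - (n + 1) + r := by
  ext x
  exact exists_congr fun _ => eq_comm

lemma strictAnti_beta_enum (r : ℤ) (l : SeqPartition) :
    StrictAnti fun n : ℕ => (l.f n : ℤ) - (n + 1) + r :=
  strictAnti_nat_of_succ_lt fun n => by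
    have : l.f (n + 1) ≤ l.f n := l.antitone (by omega)
    push_cast
    omega

lemma eq_of_beta_eq {r r' : ℤ} {l l' : SeqPartition} (h : beta r l = beta r' l') : l = l' := by
  rw [beta_eq_range, beta_eq_range] at h
  have hg := ((strictAnti_beta_enum r l).dual_right.range_inj
    (strictAnti_beta_enum r' l').dual_right).1 h
  have key (n : ℕ) : (l.f n : ℤ) + r = l'.f n + r' := by
    have := congrFun hg n
    simp only [comp_apply, OrderDual.toDual_inj] at this
    omega
  obtain ⟨N, hN⟩ := l.eventually_zero
  obtain ⟨N', hN'⟩ := l'.eventually_zero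
  have hr : r = r' := by
    simpa [hN _ (le_max_left N N'), hN' _ (le_max_right N N')] using key (max N N')
  ext n
  have := key n
  omega

lemma ofBeta_beta (r : ℤ) (l : SeqPartition) : ofBeta (beta r l) = l := by
  have h : ∃ m : SeqPartition, ∃ r' : ℤ, beta r' m = beta r l := ⟨l, r, rfl⟩
  rw [ofBeta, dif_pos h]
  exact eq_of_beta_eq h.choose_spec.choose_spec

lemma image_add_beta (a r : ℤ) (l : SeqPartition) :
    (· + a) '' beta r l = beta (r + a) l := by
  ext x
  simp only [beta, mem_image, mem_ofPred_eq]
  constructor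
  · rintro ⟨_, ⟨n, rfl⟩, rfl⟩
    exact ⟨n, by ring⟩
  · rintro ⟨n, rfl⟩
    exact ⟨_, ⟨n, rfl⟩, by ring⟩

lemma ofBeta_image_add (a : ℤ) (B : Set ℤ) : ofBeta ((· + a) '' B) = ofBeta B := by
  by_cases hB : ∃ l : SeqPartition, ∃ r : ℤ, beta r l = B
  · obtain ⟨l, r, rfl⟩ := hB
    rw [image_add_beta, ofBeta_beta, ofBeta_beta]
  · have hB' : ¬ ∃ l : SeqPartition, ∃ r : ℤ, beta r l = (· + a) '' B := by
      rintro ⟨l, r, h⟩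
      refine hB ⟨l, r + -a, ?_⟩
      rw [← image_add_beta, h, image_image]
      simp
    rw [ofBeta, ofBeta, dif_neg hB, dif_neg hB']

lemma beta_default (r : ℤ) : beta r default = Iio r := by
  ext x
  have h0 (n : ℕ) : (default : SeqPartition).f n = 0 := rfl
  simp only [beta, mem_ofPred_eq, mem_Iio, h0, Nat.cast_zero]
  exact ⟨fun ⟨n, hn⟩ => by omega, fun hx => ⟨(r - x - 1).toNat, by omega⟩⟩

lemma beta_subset_Iio (r : ℤ) (l : SeqPartition) : beta r l ⊆ Iio (l.f 0 + r) := by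
  rintro _ ⟨n, rfl⟩
  have : l.f n ≤ l.f 0 := l.antitone n.zero_le
  simp only [mem_Iio]
  omega

lemma exists_Iio_subset_beta (r : ℤ) (l : SeqPartition) : ∃ L, Iio L ⊆ beta r l := by
  obtain ⟨N, hN⟩ := l.eventually_zero
  refine ⟨r - N, fun y hy => ⟨(r - y - 1).toNat, ?_⟩⟩
  rw [hN _ (by simp only [mem_Iio] at hy; omega)]
  simp only [mem_Iio] at hy
  omega

/-- Adding a bead above all others prepends a part to the partition. -/
lemma exists_beta_eq_insert {r a : ℤ} {l : SeqPartition} (ha : ∀ x ∈ beta r l, x < a) :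
    ∃ l' : SeqPartition, ∃ r' : ℤ, beta r' l' = insert a (beta r l) := by
  have h0 : (l.f 0 : ℤ) ≤ a - r := by
    have := ha _ ⟨0, rfl⟩
    omega
  let f : ℕ → ℕ := fun n => match n with
    | 0 => (a - r).toNat
    | n + 1 => l.f n
  have hf : Antitone f := antitone_nat_of_succ_le fun n => by
    cases n with
    | zero => simp only [f]; omega
    | succ n => exact l.antitone n.le_succ
  obtain ⟨N, hN⟩ := l.eventually_zero
  refine ⟨⟨f, hf, N + 1, fun n hn => ?_⟩, r + 1, ?_⟩
  · obtain ⟨n, rfl⟩ := Nat.exists_eq_add_one_of_ne_zero (by omega : n ≠ 0)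
    exact hN n (by omega)
  · ext x
    simp only [beta, mem_ofPred_eq, mem_insert_iff]
    rw [← Nat.or_exists_add_one]
    simp only [f]
    refine or_congr (by omega) (exists_congr fun n => ?_)
    push_cast
    constructor <;> intro h <;> linarith

lemma exists_beta_eq_Iio_union (L : ℤ) (F : Finset ℤ) (hF : ∀ x ∈ F, L ≤ x) :
    ∃ l : SeqPartition, ∃ r : ℤ, beta r l = Iio L ∪ F := by
  induction F using Finset.induction_on_max with
  | empty => exact ⟨default, L, by simp [beta_default]⟩
  | insert a F hlt ih =>
    obtain ⟨l, r, h⟩ := ih fun x hx => hF x (Finset.mem_insert_of_mem hx)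
    have ha : ∀ x ∈ beta r l, x < a := by
      rw [h]
      rintro x (hx | hx)
      · exact lt_of_lt_of_le hx (hF a (Finset.mem_insert_self a F))
      · exact hlt x hx
    obtain ⟨l', r', h'⟩ := exists_beta_eq_insert ha
    exact ⟨l', r', by rw [h', h, Finset.coe_insert, union_insert]⟩

lemma exists_beta_eq {B : Set ℤ} {L U : ℤ} (hL : Iio L ⊆ B) (hU : B ⊆ Iio U) :
    ∃ l : SeqPartition, ∃ r : ℤ, beta r l = B := by
  have hfin : (B ∩ Ici L).Finite := (finite_Ico L U).subset fun y hy => ⟨hy.2, hU hy.1⟩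
  obtain ⟨l, r, h⟩ := exists_beta_eq_Iio_union L hfin.toFinset (by simp)
  refine ⟨l, r, h.trans ?_⟩
  rw [Finite.coe_toFinset, union_inter_distrib_left, union_eq_right.2 hL, Iio_union_Ici,
    inter_univ]

end Beta

lemma coreBeta_preimage_add (t : ℕ) (a : ℤ) (B : Set ℤ) :
    coreBeta t ((· + a) ⁻¹' B) = (· + a) ⁻¹' coreBeta t B := by
  have hinj : Injective (· + a : ℤ → ℤ) := add_left_injective a
  have hrange : ∀ S : Set ℤ, S ⊆ range (· + a) := fun S y _ => ⟨y - a, sub_add_cancel y a⟩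
  have hmod (y x : ℤ) : y + a ≡ x + a [ZMOD t] ↔ y ≡ x [ZMOD t] :=
    ⟨fun h => h.add_right_cancel' a, fun h => h.add_right a⟩
  have hncard (P : ℤ → Prop) : {y | P (y + a)}.ncard = {z | P z}.ncard :=
    ncard_preimage_of_injective_subset_range hinj (hrange _)
  ext x
  simp only [coreBeta, mem_preimage, mem_ofPred_eq]
  rw [← hncard fun z => z ∉ B ∧ z ≡ x + a [ZMOD t] ∧ z < x + a,
    ← hncard fun z => z ∈ B ∧ z ≡ x + a [ZMOD t] ∧ x + a ≤ z]
  simp only [hmod, add_lt_add_iff_right, add_le_add_iff_right]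

lemma core_ofBeta_beta (t : ℕ) (r : ℤ) (l : SeqPartition) :
    core t (ofBeta (beta r l)) = ofBeta (coreBeta t (beta r l)) := by
  rw [ofBeta_beta, core, ← zero_add r, ← image_add_beta, image_add_right, coreBeta_preimage_add,
    ← image_add_right, ofBeta_image_add]

section Abacus

variable {t : ℕ}

def runner (t : ℕ) (x : ℤ) : Set ℤ := {y | y ≡ x [ZMOD t]}

lemma mem_coreBeta_iff {B : Set ℤ} {a U x : ℤ} (ha : Iio a ⊆ B) (hU : B ⊆ Iio U) (hx : a ≤ x) :
    x ∈ coreBeta t B ↔ (runner t x ∩ Ico a x).ncard < (B ∩ (runner t x ∩ Ici a)).ncard := by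
  rw [coreBeta, mem_ofPred_eq]
  set K := runner t x ∩ Ico a x
  set above := {b | b ∈ B ∧ b ≡ x [ZMOD t] ∧ x ≤ b}
  have hK : K.Finite := (finite_Ico a x).subset inter_subset_right
  have habove : above.Finite := (finite_Ico x U).subset fun y hy => ⟨hy.2.2, hU hy.1⟩
  have hgaps : {y | y ∉ B ∧ y ≡ x [ZMOD t] ∧ y < x} = K \ B := by
    ext y
    have := @ha y
    simp only [K, runner, mem_ofPred_eq, mem_sdiff, mem_inter_iff, mem_Ico, mem_Iio] at *
    grind
  have hbeads : B ∩ (runner t x ∩ Ici a) = K ∩ B ∪ above := by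
    ext y
    simp only [K, above, runner, mem_ofPred_eq, mem_union, mem_inter_iff, mem_Ico, mem_Ici]
    grind
  have hdisj : Disjoint (K ∩ B) above :=
    disjoint_left.2 fun y hy hy' => not_le.2 hy.1.2.2 hy'.2.2
  rw [hgaps, hbeads, ncard_union_eq hdisj (hK.inter_of_left B) habove,
    ← ncard_inter_add_ncard_sdiff_eq_ncard K B hK]
  omega

lemma encard_preimage_inter_runner {σ : ℤ → ℤ} (hσ : Involutive σ)
    (hmod : ∀ y, σ y ≡ y [ZMOD t]) {d : ℕ} (hd : ∀ y, σ y ≤ y + d) {B : Set ℤ} {a : ℤ}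
    (ha : Iio (a + d) ⊆ B) (x : ℤ) :
    (σ ⁻¹' B ∩ (runner t x ∩ Ici a)).encard = (B ∩ (runner t x ∩ Ici a)).encard := by
  set R := runner t x ∩ Ici a
  set J := σ ⁻¹' Ici a
  have hRJ : σ ⁻¹' (R ∩ J) = R ∩ J := by
    ext y
    have hσx : σ y ≡ x [ZMOD t] ↔ y ≡ x [ZMOD t] := ⟨(hmod y).symm.trans, (hmod y).trans⟩
    simp only [R, J, runner, mem_inter_iff, mem_preimage, mem_ofPred_eq, mem_Ici, hσ y, hσx]
    tauto
  have hsplit (S : Set ℤ) (hS : R \ J ⊆ S) :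
      (S ∩ R).encard = (S ∩ (R ∩ J)).encard + (R \ J).encard := by
    rw [← encard_sdiff_add_encard_inter (S ∩ R) J, add_comm, inter_assoc]
    congr 2
    ext y
    exact ⟨fun h => ⟨h.1.2, h.2⟩, fun h => ⟨⟨hS h, h.1⟩, h.2⟩⟩
  -- A position of `R` that `σ` moves below `a` lies below `a + d`, where every position is a bead.
  have hlow : R \ J ⊆ B ∩ σ ⁻¹' B := by
    rintro y ⟨⟨-, hy⟩, hσy⟩
    have := hd (σ y)
    simp only [J, mem_preimage, mem_Ici, not_le, hσ y] at hσy this hy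
    exact ⟨ha (by simp only [mem_Iio]; omega), ha (by simp only [mem_Iio]; omega)⟩
  rw [hsplit _ fun y hy => (hlow hy).2, hsplit _ fun y hy => (hlow hy).1, ← hRJ,
    ← preimage_inter, hRJ, encard_preimage_of_injective_subset_range hσ.injective
      (hσ.surjective.range_eq ▸ subset_univ _)]

lemma Iio_sub_subset_preimage {σ : ℤ → ℤ} {d : ℕ} (hd : ∀ y, σ y ≤ y + d) {B : Set ℤ} {L : ℤ}
    (hL : Iio L ⊆ B) : Iio (L - d) ⊆ σ ⁻¹' B := fun y hy =>
  hL (show σ y < L by have := hd y; simp only [mem_Iio] at hy; omega)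

lemma preimage_subset_Iio_add {σ : ℤ → ℤ} (hσ : Involutive σ) {d : ℕ} (hd : ∀ y, σ y ≤ y + d)
    {B : Set ℤ} {U : ℤ} (hU : B ⊆ Iio U) : σ ⁻¹' B ⊆ Iio (U + d) := fun y hy => by
  have := hd (σ y)
  have := hU hy
  simp only [mem_Iio, hσ y] at *
  omega

theorem coreBeta_preimage_of_involutive {σ : ℤ → ℤ} (hσ : Involutive σ)
    (hmod : ∀ y, σ y ≡ y [ZMOD t]) {d : ℕ} (hd : ∀ y, σ y ≤ y + d) {B : Set ℤ} {L U : ℤ}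
    (hL : Iio L ⊆ B) (hU : B ⊆ Iio U) : coreBeta t (σ ⁻¹' B) = coreBeta t B := by
  ext x
  set a := min x (L - d)
  have ha : Iio (a + d) ⊆ B := (Iio_subset_Iio (by omega)).trans hL
  have haσ : Iio a ⊆ σ ⁻¹' B :=
    (Iio_subset_Iio (by omega)).trans (Iio_sub_subset_preimage hd hL)
  rw [mem_coreBeta_iff haσ (preimage_subset_Iio_add hσ hd hU) (min_le_left _ _),
    mem_coreBeta_iff (a := a) ((Iio_subset_Iio (by omega)).trans ha) hU (min_le_left _ _),
    ncard_def (σ ⁻¹' B ∩ _), encard_preimage_inter_runner hσ hmod hd ha, ← ncard_def]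

end Abacus

section GenAct

variable {s t : ℕ}

lemma genActZ_eq_or (i : ZMod s) (n : ℤ) :
    genActZ s t i n = n + t ∨ genActZ s t i n = n ∨ genActZ s t i n = n - t := by
  unfold genActZ
  split_ifs <;> simp

lemma genActZ_modEq (i : ZMod s) (n : ℤ) : genActZ s t i n ≡ n [ZMOD t] := by
  rcases genActZ_eq_or i n with h | h | h <;> rw [h]
  · exact Int.add_modEq_right
  · exact Int.modEq_iff_dvd.2 ⟨1, by ring⟩

lemma genActZ_le (i : ZMod s) (n : ℤ) : genActZ s t i n ≤ n + t := by
  rcases genActZ_eq_or (t := t) i n with h | h | h <;> omega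

/-- `w_i` swaps `n` and `n + t` for `n` in one class mod `s`; it is an involution because that
class and its translate by `t` are distinct. -/
lemma genActZ_involutive (ht : (t : ZMod s) ≠ 0) (i : ZMod s) : Involutive (genActZ s t i) := by
  intro n
  unfold genActZ
  split_ifs <;> push_cast at * <;> grind

lemma natCast_ne_zero_of_coprime (hs : s ≠ 1) (hst : s.Coprime t) : (t : ZMod s) ≠ 0 :=
  fun h => hs (hst.eq_one_of_dvd ((ZMod.natCast_eq_zero_iff t s).1 h))

lemma core_genAct (ht : (t : ZMod s) ≠ 0) (i : ZMod s) (l : SeqPartition) :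
    core t (genAct s t i l) = core t l := by
  have hσ := genActZ_involutive ht i
  obtain ⟨L, hL⟩ := exists_Iio_subset_beta 0 l
  have hU := beta_subset_Iio 0 l
  obtain ⟨l', r, h⟩ := exists_beta_eq (Iio_sub_subset_preimage (genActZ_le i) hL)
    (preimage_subset_Iio_add hσ (genActZ_le i) hU)
  rw [genAct, hσ.image_eq_preimage_symm, ← h, core_ofBeta_beta, h,
    coreBeta_preimage_of_involutive hσ (genActZ_modEq i) (genActZ_le i) hL hU, core]

end GenAct

end SeqPartition

open SeqPartition in
theorem core_t_wordAct_general (s t : ℕ) (hs : 2 ≤ s) (hst : Nat.Coprime s t)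
    (l : SeqPartition) (w : List (ZMod s)) :
    core t (wordAct s t w l) = core t l := by
  have ht : (t : ZMod s) ≠ 0 := natCast_ne_zero_of_coprime (by omega) hst
  induction w with
  | nil => rfl
  | cons i w ih => exact (core_genAct ht i _).trans ih

open SeqPartition in
/-- For `w ∈ W_s` acting at level `t`, the `t`-core of `wλ` equals the `t`-core of `λ`. -/
theorem core_t_wordAct (s t : ℕ) (hs : 2 ≤ s) (ht : 0 < t) (hst : Nat.Coprime s t)
    (l : SeqPartition) (w : List (ZMod s)) :
    core t (wordAct s t w l) = core t l :=
  core_t_wordAct_general s t hs hst l w
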